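/- Fix x₀ ∈ G, R > 0, 0 < δ < 1, and let d be a pseudo metric with jump size s. Define η(x) := min( (R - s - d(x₀,x))₊ / (δR), 1 ). Then |η(y) - η(x)| ≤ d(x,y)/(δR) · 𝟙_{{(1-δ)R - 2s ≤ d(x,x₀) ≤ R}} for all x, y ∈ G with ω(x,y) > 0. -/

import Mathlib

/-!
The cutoff is `η = ramp (δ R) ∘ (R - s - d x₀ ·)`, where `ramp c` clamps `u₊ / c` to `[0, 1]`.
Clamping is `1/c`-Lipschitz and `d x₀ ·` is `1`-Lipschitz, which gives the gradient bound `d x y / (δ R)`.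
A jump has length at most `s`, so if `d x x₀ < (1 - δ) R - 2 s` both endpoints lie where `ramp = 1`,
and if `d x x₀ > R` both lie where `ramp = 0`; off the annulus the difference therefore vanishes.
-/

noncomputable def ramp (c u : ℝ) : ℝ := min (max u 0 / c) 1

lemma ramp_eq_one {c u : ℝ} (hc : 0 < c) (h : c ≤ u) : ramp c u = 1 :=
  min_eq_right <| (one_le_div hc).mpr <| le_max_of_le_left h

lemma ramp_eq_zero {c u : ℝ} (h : u ≤ 0) : ramp c u = 0 := by
  simp only [ramp, max_eq_right h, zero_div, min_eq_left zero_le_one]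

lemma abs_ramp_sub_ramp_le {c : ℝ} (hc : 0 < c) (u v : ℝ) :
    |ramp c u - ramp c v| ≤ |u - v| / c :=
  calc |ramp c u - ramp c v|
      ≤ |max u 0 / c - max v 0 / c| := by
        simpa [ramp] using abs_min_sub_min_le_max (max u 0 / c) 1 (max v 0 / c) 1
    _ = |max u 0 - max v 0| / c := by rw [div_sub_div_same, abs_div, abs_of_pos hc]
    _ ≤ |u - v| / c := by gcongr ?_ / c; exact abs_max_sub_max_le_abs u v 0

lemma abs_sub_le_of_triangle {G : Type*} (d : G → G → ℝ)
    (hd_symm : ∀ x y, d x y = d y x) (hd_tri : ∀ x y z, d x y ≤ d x z + d z y) (x₀ x y : G) :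
    |d x₀ y - d x₀ x| ≤ d x y := by
  rw [abs_sub_le_iff]
  constructor
  · linarith [hd_tri x₀ y x]
  · linarith [hd_tri x₀ x y, hd_symm x y]

theorem stmt11_general {G : Type*}
    (ω : G → G → ℝ) (d : G → G → ℝ)
    (hd_symm : ∀ x y, d x y = d y x)
    (hd_tri : ∀ x y z, d x y ≤ d x z + d z y)
    (s : ℝ) (hjump : ∀ x y, 0 < ω x y → d x y ≤ s)
    (x₀ : G) (R δ : ℝ) (hR : 0 < R) (hδ : 0 < δ)
    (η : G → ℝ) (hη : ∀ x, η x = min (max (R - s - d x₀ x) 0 / (δ * R)) 1) :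
    ∀ x y : G, 0 < ω x y →
      |η y - η x| ≤ d x y / (δ * R) *
        (if (1 - δ) * R - 2 * s ≤ d x x₀ ∧ d x x₀ ≤ R then 1 else 0) := by
  intro x y hxy
  have hδR : 0 < δ * R := mul_pos hδ hR
  have hjump_xy := hjump x y hxy
  have hdist := abs_le.mp (abs_sub_le_of_triangle d hd_symm hd_tri x₀ x y)
  have hη_ramp : ∀ z, η z = ramp (δ * R) (R - s - d x₀ z) := hη
  rw [hη_ramp x, hη_ramp y, hd_symm x x₀]
  split_ifs with hnear
  · rw [mul_one]
    refine (abs_ramp_sub_ramp_le hδR _ _).trans ?_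
    gcongr
    rw [abs_le]
    constructor <;> linarith
  · rw [mul_zero, abs_nonpos_iff, sub_eq_zero]
    rcases not_and_or.mp hnear with hinner | houter
    · rw [ramp_eq_one hδR, ramp_eq_one hδR] <;> linarith
    · rw [ramp_eq_zero, ramp_eq_zero] <;> linarith

theorem stmt11 {G : Type*} [Countable G]
    (ω : G → G → ℝ) (μ : G → ℝ) (d : G → G → ℝ)
    (hω_nonneg : ∀ x y, 0 ≤ ω x y)
    (hω_symm : ∀ x y, ω x y = ω y x)
    (hω_diag : ∀ x, ω x x = 0)
    (hμ : ∀ x, 0 < μ x)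
    (hd_self : ∀ x, d x x = 0)
    (hd_symm : ∀ x y, d x y = d y x)
    (hd_tri : ∀ x y z, d x y ≤ d x z + d z y)
    (s : ℝ) (hs : 0 ≤ s) (hjump : ∀ x y, 0 < ω x y → d x y ≤ s)
    (x₀ : G) (R δ : ℝ) (hR : 0 < R) (hδ : 0 < δ) (hδ1 : δ < 1)
    (η : G → ℝ) (hη : ∀ x, η x = min (max (R - s - d x₀ x) 0 / (δ * R)) 1) :
    ∀ x y : G, 0 < ω x y →
      |η y - η x| ≤ d x y / (δ * R) *
        (if (1 - δ) * R - 2 * s ≤ d x x₀ ∧ d x x₀ ≤ R then 1 else 0) :=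
  stmt11_general ω d hd_symm hd_tri s hjump x₀ R δ hR hδ η hη
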